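/- Let t ≥ 1 be an integer and let β be an element of order 2^t + 1 in the field 𝔽_{2^{2t}}. Define C = { c = (c₀, c₁, …, c_{2^t}) ∈ 𝔽₂^{2^t+1} : Σ_{i=0}^{2^t} cᵢ = 0 in 𝔽₂ and Σ_{i=0}^{2^t} cᵢ β^i = 0 in 𝔽_{2^{2t}} }. Then C is a linear subspace of 𝔽₂^{2^t+1} of dimension at least 2^t − 2t, and every nonzero vector of C has Hamming weight at least 6. -/

import Mathlib

/-!
The code is the kernel of `c ↦ (∑ cᵢ, ∑ cᵢ βⁱ)`, a linear map into a space of dimension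
`1 + 2t`, whence the dimension bound. A nonzero codeword has even weight, and its support
gives a set `S` of distinct powers of `β` with `∑_{x ∈ S} x = 0`. Since `x ^ (2^t + 1) = 1`,
the field automorphism `x ↦ x ^ 2^t` inverts every element of `S`, so also
`∑_{x ∈ S} x⁻¹ = 0`.
Weight 2 is impossible because `x + y = 0` means `x = y` in characteristic 2; for weight 4,
clearing denominators turns the second relation into `e₃(x, y, z, w) = 0`, and after
eliminating `w = x + y + z` this factors as `(x + y)(y + z)(x + z) = 0`.
-/

open Finset

theorem LinearMap.finrank_sub_finrank_le_finrank_ker {K V W : Type*} [DivisionRing K]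
    [AddCommGroup V] [Module K V] [AddCommGroup W] [Module K W]
    [FiniteDimensional K V] [FiniteDimensional K W] (f : V →ₗ[K] W) :
    Module.finrank K V - Module.finrank K W ≤ Module.finrank K (LinearMap.ker f) := by
  have hrank := f.finrank_range_add_finrank_ker
  have hrange := (LinearMap.range f).finrank_le
  omega

theorem injective_pow_fin_orderOf {G : Type*} [Monoid G] {β : G} {n : ℕ}
    (hβ : orderOf β = n) : Function.Injective fun i : Fin n ↦ β ^ (i : ℕ) :=
  fun i j hij ↦ Fin.ext <| pow_injOn_Iio_orderOf (by simp [hβ]) (by simp [hβ]) hij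

section CharTwo

variable {K : Type*} [Field K] [CharP K 2]

theorem CharTwo.eq_or_eq_or_eq_of_sum_eq_zero_of_sum_inv_eq_zero {x y z w : K}
    (hx : x ≠ 0) (hy : y ≠ 0) (hz : z ≠ 0) (hw : w ≠ 0)
    (hsum : x + y + z + w = 0) (hsum_inv : x⁻¹ + y⁻¹ + z⁻¹ + w⁻¹ = 0) :
    x = y ∨ y = z ∨ x = z := by
  have hw_eq : w = x + y + z := (CharTwo.add_eq_zero.mp hsum).symm
  have he₃ : y * z * w + x * z * w + x * y * w + x * y * z = 0 := by
    field_simp at hsum_inv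
    linear_combination hsum_inv
  have hfactor : (x + y) * (y + z) * (x + z) = 0 := by
    rw [hw_eq] at he₃
    linear_combination he₃ - x * y * z * CharTwo.two_eq_zero (R := K)
  simp only [mul_eq_zero, CharTwo.add_eq_zero] at hfactor
  tauto

theorem six_le_card_of_sum_eq_zero {t : ℕ} {S : Finset K}
    (hS : ∀ x ∈ S, x ^ (2 ^ t + 1) = 1) (hsum : ∑ x ∈ S, x = 0)
    (heven : Even #S) (hne : S.Nonempty) : 6 ≤ #S := by
  classical
  have hS_ne_zero : ∀ x ∈ S, x ≠ 0 := fun x hx h0 ↦ by simpa [h0] using hS x hx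
  have hsum_inv : ∑ x ∈ S, x⁻¹ = 0 := by
    calc ∑ x ∈ S, x⁻¹ = ∑ x ∈ S, x ^ 2 ^ t :=
          sum_congr rfl fun x hx ↦
            (eq_inv_of_mul_eq_one_left (by rw [← pow_succ, hS x hx])).symm
      _ = (∑ x ∈ S, x) ^ 2 ^ t := (sum_pow_char_pow _ _ _ _).symm
      _ = 0 := by rw [hsum, zero_pow (by positivity)]
  by_contra! hlt
  have hpos := hne.card_pos
  obtain hcard | hcard : #S = 2 ∨ #S = 4 := by
    obtain ⟨k, hk⟩ := heven
    omega
  · obtain ⟨x, y, hxy, rfl⟩ := card_eq_two.mp hcard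
    rw [sum_pair hxy, CharTwo.add_eq_zero] at hsum
    exact hxy hsum
  · obtain ⟨x, y, z, w, hxy, hxz, hxw, hyz, hyw, hzw, rfl⟩ := card_eq_four.mp hcard
    simp only [mem_insert, mem_singleton, forall_eq_or_imp, forall_eq] at hS_ne_zero
    obtain ⟨hx, hy, hz, hw⟩ := hS_ne_zero
    simp only [sum_insert, mem_insert, mem_singleton, sum_singleton, hxy, hxz, hxw, hyz, hyw,
      hzw, or_self, not_false_eq_true, ← add_assoc] at hsum hsum_inv
    rcases CharTwo.eq_or_eq_or_eq_of_sum_eq_zero_of_sum_inv_eq_zero hx hy hz hw hsum hsum_inv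
      with h | h | h <;> contradiction

end CharTwo

theorem sum_zmod_two_smul_eq_sum_filter {ι M : Type*} [Fintype ι] [AddCommMonoid M]
    [Module (ZMod 2) M] (c : ι → ZMod 2) (v : ι → M) :
    ∑ i, c i • v i = ∑ i ∈ univ.filter (c · ≠ 0), v i := by
  classical
  rw [sum_filter]
  refine sum_congr rfl fun i _ ↦ ?_
  obtain h | h : c i = 0 ∨ c i = 1 := by generalize c i = a; decide +revert
  all_goals simp [h]

theorem sum_zmod_two_eq_hammingNorm {ι : Type*} [Fintype ι] (c : ι → ZMod 2) :
    ∑ i, c i = hammingNorm c := by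
  simpa [hammingNorm] using sum_zmod_two_smul_eq_sum_filter c fun _ ↦ (1 : ZMod 2)

def parityCheck {F K : Type*} [CommSemiring F] [Semiring K] [Module F K] (n : ℕ) (β : K) :
    (Fin n → F) →ₗ[F] F × K :=
  (Fintype.linearCombination F fun _ ↦ 1).prod
    (Fintype.linearCombination F fun i : Fin n ↦ β ^ (i : ℕ))

theorem parityCheck_apply {F K : Type*} [CommSemiring F] [Semiring K] [Module F K] (n : ℕ)
    (β : K) (c : Fin n → F) :
    parityCheck n β c = (∑ i, c i, ∑ i, c i • β ^ (i : ℕ)) := by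
  simp [parityCheck, Fintype.linearCombination_apply]

theorem finrank_ker_parityCheck {F K : Type*} [Field F] [Ring K] [Module F K]
    [FiniteDimensional F K] (n : ℕ) (β : K) :
    n - (1 + Module.finrank F K) ≤
      Module.finrank F (LinearMap.ker (parityCheck (F := F) n β)) := by
  simpa using (parityCheck (F := F) n β).finrank_sub_finrank_le_finrank_ker

theorem six_le_hammingNorm_of_mem_ker_parityCheck {K : Type*} [Field K] [CharP K 2]
    [Module (ZMod 2) K] {t : ℕ} {β : K} (hβ : orderOf β = 2 ^ t + 1)
    {c : Fin (2 ^ t + 1) → ZMod 2} (hc : c ∈ LinearMap.ker (parityCheck _ β)) (hc0 : c ≠ 0) :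
    6 ≤ hammingNorm c := by
  classical
  obtain ⟨hparity, hroot⟩ : ∑ i, c i = 0 ∧ ∑ i, c i • β ^ (i : ℕ) = 0 := by
    simpa [parityCheck_apply, Prod.ext_iff] using hc
  have hinj := injective_pow_fin_orderOf hβ
  have hβ1 : β ^ (2 ^ t + 1) = 1 := hβ ▸ pow_orderOf_eq_one β
  set S := (univ.filter (c · ≠ 0)).image fun i : Fin (2 ^ t + 1) ↦ β ^ (i : ℕ)
  have hweight : hammingNorm c = #S := (card_image_of_injective _ hinj).symm
  rw [hweight]
  refine six_le_card_of_sum_eq_zero (t := t) ?_ ?_ ?_ ?_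
  · intro x hx
    obtain ⟨i, -, rfl⟩ := mem_image.mp hx
    rw [pow_right_comm, hβ1, one_pow]
  · rwa [sum_image fun i _ j _ h ↦ hinj h, ← sum_zmod_two_smul_eq_sum_filter]
  · rwa [← hweight, ← ZMod.natCast_eq_zero_iff_even, ← sum_zmod_two_eq_hammingNorm]
  · exact card_pos.mp (hweight ▸ hammingNorm_pos_iff.mpr hc0)

/-- Appendix claim of the paper: for `β` of order `2^t + 1` in `𝔽_{2^{2t}}`, the
binary code `C = {c ∈ 𝔽₂^{2^t+1} : Σ cᵢ = 0 and Σ cᵢ βⁱ = 0}` is a linear subspace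
of dimension at least `2^t − 2t` whose nonzero vectors all have Hamming weight at
least `6`. -/
theorem stmt_17 (t : ℕ) (ht : 1 ≤ t) (β : GaloisField 2 (2 * t))
    (hβ : orderOf β = 2 ^ t + 1) :
    ∃ W : Submodule (ZMod 2) (Fin (2 ^ t + 1) → ZMod 2),
      (W : Set (Fin (2 ^ t + 1) → ZMod 2)) =
        {c | ∑ i, c i = 0 ∧ ∑ i : Fin (2 ^ t + 1), c i • β ^ (i : ℕ) = 0} ∧
      2 ^ t - 2 * t ≤ Module.finrank (ZMod 2) W ∧
      ∀ c ∈ W, c ≠ 0 → 6 ≤ hammingNorm c := by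
  refine ⟨LinearMap.ker (parityCheck _ β), ?_, ?_,
    fun c hc hc0 ↦ six_le_hammingNorm_of_mem_ker_parityCheck hβ hc hc0⟩
  · ext c
    simp [parityCheck_apply, Prod.ext_iff]
  · have hdim := finrank_ker_parityCheck (F := ZMod 2) (2 ^ t + 1) β
    rw [GaloisField.finrank 2 (by omega)] at hdim
    omega
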